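/- arXiv:1607.07051 — 3 statements merged into one kernel-verified Lean document; each statement's English description precedes it below -/
import Mathlib

section
/- Let u_ε(x) = log((ε²+r₀²)²/(ε²+|x−x₀|²)²) on B_{r₀}(x₀) and u_ε = 0 on Ω∖B_{r₀}(x₀), where B_{r₀}(x₀) ⊂ Ω. Then ∫_Ω |∇u_ε|² dx = 16π log(1/ε²) + O(1) and log(∫_Ω e^{u_ε} dx) = log(1/ε²) + O(1) as ε → 0. Consequently I_λ(u_ε) = (8π−λ) log(1/ε²) + O(1), and in particular I_λ(u_ε) → −∞ as ε → 0 for λ > 8π. -/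
/-!
Both integrals are radial, so polar coordinates reduce them to one-variable integrals with
explicit primitives: `∫_B |∇u_ε|² = 16π (log (ε² + r₀²) - log ε² - r₀² / (ε² + r₀²))`, and, since
`e^{u_ε} - 1` vanishes off `B`, `∫_Ω e^{u_ε} = |Ω| + π r₀⁴ / ε²`. Hence `ε² ∫_Ω e^{u_ε}` stays
between `π r₀⁴` and `π r₀⁴ + |Ω|`, so both quantities are `log (1/ε²)` times a constant up to
`O(1)`, and `I_λ(u_ε) → -∞` because `log (1/ε²) → ∞`.
-/

open MeasureTheory Real Filter Topology Classical

open Metric Set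

local notation "ℝ²" => EuclideanSpace ℝ (Fin 2)

theorem integral_fun_norm_sub_eq_two_pi_mul (x₀ : ℝ²) (f : ℝ → ℝ) :
    ∫ x : ℝ², f ‖x - x₀‖ = 2 * π * ∫ r in Ioi (0 : ℝ), r * f r := by
  have hvol : volume.real (ball (0 : ℝ²) 1) = π := by
    rw [measureReal_def, EuclideanSpace.volume_ball]
    norm_num [Gamma_two, sq_sqrt pi_nonneg, pi_nonneg]
  rw [integral_sub_right_eq_self (fun x => f ‖x‖) x₀, integral_fun_norm_addHaar volume f,
    finrank_euclideanSpace_fin, hvol]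
  simp only [nsmul_eq_mul, smul_eq_mul, Nat.cast_ofNat, Nat.add_one_sub_one, pow_one]
  ring

theorem setIntegral_ball_fun_norm_sub (x₀ : ℝ²) {R : ℝ} (hR : 0 ≤ R) (g : ℝ → ℝ) :
    ∫ x in ball x₀ R, g ‖x - x₀‖ = 2 * π * ∫ r in (0 : ℝ)..R, r * g r := by
  have hind : (ball x₀ R).indicator (fun x => g ‖x - x₀‖)
      = fun x => (Iio R).indicator g ‖x - x₀‖ := by
    ext x
    simp [indicator_apply, mem_ball, dist_eq_norm]
  rw [← integral_indicator measurableSet_ball, hind, integral_fun_norm_sub_eq_two_pi_mul,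
    intervalIntegral.integral_of_le hR, integral_Ioc_eq_integral_Ioo, ← Ioi_inter_Iio,
    ← setIntegral_indicator measurableSet_Iio]
  simp only [indicator_apply, mem_Iio, mul_ite, mul_zero]

theorem integral_pow_three_div_add_sq_sq {a : ℝ} (ha : 0 < a) (R : ℝ) :
    ∫ r in (0 : ℝ)..R, r ^ 3 / (a + r ^ 2) ^ 2
      = (log (a + R ^ 2) - log a - R ^ 2 / (a + R ^ 2)) / 2 := by
  have hpos : ∀ r : ℝ, 0 < a + r ^ 2 := fun r => by positivity
  have hderiv : ∀ r ∈ uIcc (0 : ℝ) R,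
      HasDerivAt (fun r => (log (a + r ^ 2) + a / (a + r ^ 2)) / 2)
        (r ^ 3 / (a + r ^ 2) ^ 2) r := by
    intro r _
    have hq : HasDerivAt (fun r : ℝ => a + r ^ 2) (2 * r) r := by
      simpa using (hasDerivAt_pow 2 r).const_add a
    refine (((hq.log (hpos r).ne').add ((hq.inv (hpos r).ne').const_mul a)).div_const 2
      ).congr_deriv ?_
    field_simp
    ring
  have hcont : Continuous fun r : ℝ => r ^ 3 / (a + r ^ 2) ^ 2 :=
    by fun_prop (disch := exact fun r => (pow_pos (hpos r) 2).ne')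
  rw [intervalIntegral.integral_eq_sub_of_hasDerivAt hderiv
    (hcont.intervalIntegrable _ _)]
  field_simp
  ring_nf

theorem integral_mul_div_add_sq_sq_sub_one {a : ℝ} (ha : 0 < a) (R : ℝ) :
    ∫ r in (0 : ℝ)..R, r * ((a + R ^ 2) ^ 2 / (a + r ^ 2) ^ 2 - 1) = R ^ 4 / (2 * a) := by
  have hpos : ∀ r : ℝ, 0 < a + r ^ 2 := fun r => by positivity
  have hderiv : ∀ r ∈ uIcc (0 : ℝ) R,
      HasDerivAt (fun r => -((a + R ^ 2) ^ 2 / 2) * (a + r ^ 2)⁻¹ - r ^ 2 / 2)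
        (r * ((a + R ^ 2) ^ 2 / (a + r ^ 2) ^ 2 - 1)) r := by
    intro r _
    have hq : HasDerivAt (fun r : ℝ => a + r ^ 2) (2 * r) r := by
      simpa using (hasDerivAt_pow 2 r).const_add a
    refine (((hq.inv (hpos r).ne').const_mul _).sub ((hasDerivAt_pow 2 r).div_const 2)
      ).congr_deriv ?_
    field_simp
    ring
  have hcont : Continuous fun r : ℝ => r * ((a + R ^ 2) ^ 2 / (a + r ^ 2) ^ 2 - 1) :=
    by fun_prop (disch := exact fun r => (pow_pos (hpos r) 2).ne')
  rw [intervalIntegral.integral_eq_sub_of_hasDerivAt hderiv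
    (hcont.intervalIntegrable _ _)]
  field_simp
  ring

noncomputable def liouvilleBubble (x₀ : ℝ²) (r₀ ε : ℝ) (x : ℝ²) : ℝ :=
  if x ∈ ball x₀ r₀ then log ((ε ^ 2 + r₀ ^ 2) ^ 2 / (ε ^ 2 + ‖x - x₀‖ ^ 2) ^ 2) else 0

section LiouvilleBubble

variable (x₀ : ℝ²) {r₀ ε : ℝ}

theorem setIntegral_ball_gradient_sq (hr₀ : 0 ≤ r₀) (hε : ε ≠ 0) :
    ∫ x in ball x₀ r₀, 16 * ‖x - x₀‖ ^ 2 / (ε ^ 2 + ‖x - x₀‖ ^ 2) ^ 2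
      = 16 * π * (log (ε ^ 2 + r₀ ^ 2) - log (ε ^ 2) - r₀ ^ 2 / (ε ^ 2 + r₀ ^ 2)) := by
  rw [setIntegral_ball_fun_norm_sub x₀ hr₀ fun r => 16 * r ^ 2 / (ε ^ 2 + r ^ 2) ^ 2]
  have hintegrand : ∀ r : ℝ, r * (16 * r ^ 2 / (ε ^ 2 + r ^ 2) ^ 2)
      = 16 * (r ^ 3 / (ε ^ 2 + r ^ 2) ^ 2) := fun r => by ring
  simp_rw [hintegrand, intervalIntegral.integral_const_mul,
    integral_pow_three_div_add_sq_sq (by positivity : 0 < ε ^ 2)]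
  ring

theorem exp_liouvilleBubble (hε : ε ≠ 0) (x : ℝ²) :
    exp (liouvilleBubble x₀ r₀ ε x)
      = 1 + (ball x₀ r₀).indicator
          (fun x => (ε ^ 2 + r₀ ^ 2) ^ 2 / (ε ^ 2 + ‖x - x₀‖ ^ 2) ^ 2 - 1) x := by
  by_cases hx : x ∈ ball x₀ r₀
  · simp only [liouvilleBubble, hx, if_true, indicator_of_mem]
    rw [exp_log (by positivity)]
    ring
  · simp [liouvilleBubble, hx]

theorem setIntegral_ball_exp_liouvilleBubble_sub_one (hr₀ : 0 ≤ r₀) (hε : ε ≠ 0) :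
    ∫ x in ball x₀ r₀, ((ε ^ 2 + r₀ ^ 2) ^ 2 / (ε ^ 2 + ‖x - x₀‖ ^ 2) ^ 2 - 1)
      = π * r₀ ^ 4 / ε ^ 2 := by
  rw [setIntegral_ball_fun_norm_sub x₀ hr₀
      fun r => (ε ^ 2 + r₀ ^ 2) ^ 2 / (ε ^ 2 + r ^ 2) ^ 2 - 1,
    integral_mul_div_add_sq_sq_sub_one (by positivity)]
  field_simp

theorem setIntegral_exp_liouvilleBubble {Ω : Set ℝ²} (hr₀ : 0 ≤ r₀) (hε : ε ≠ 0)
    (hball : ball x₀ r₀ ⊆ Ω) (hΩ : Bornology.IsBounded Ω) :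
    ∫ x in Ω, exp (liouvilleBubble x₀ r₀ ε x) = volume.real Ω + π * r₀ ^ 4 / ε ^ 2 := by
  have hcont : Continuous fun x : ℝ² => (ε ^ 2 + r₀ ^ 2) ^ 2 / (ε ^ 2 + ‖x - x₀‖ ^ 2) ^ 2 - 1 :=
    by fun_prop (disch := exact fun x => by positivity)
  have hint : Integrable ((ball x₀ r₀).indicator
      fun x => (ε ^ 2 + r₀ ^ 2) ^ 2 / (ε ^ 2 + ‖x - x₀‖ ^ 2) ^ 2 - 1) :=
    ((hcont.continuousOn.integrableOn_compact (isCompact_closedBall x₀ r₀)).mono_set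
      ball_subset_closedBall).integrable_indicator measurableSet_ball
  have : IsFiniteMeasure (volume.restrict Ω) := isFiniteMeasure_restrict.2 hΩ.measure_lt_top.ne
  simp_rw [exp_liouvilleBubble x₀ hε]
  rw [integral_add (integrable_const 1) hint.restrict,
    setIntegral_indicator measurableSet_ball, inter_eq_right.2 hball,
    setIntegral_ball_exp_liouvilleBubble_sub_one x₀ hr₀ hε, setIntegral_const, smul_eq_mul,
    mul_one]

theorem abs_setIntegral_ball_gradient_sq_sub_le (hr₀ : 0 < r₀) (hε : ε ∈ Ioo (0 : ℝ) 1) :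
    |(∫ x in ball x₀ r₀, 16 * ‖x - x₀‖ ^ 2 / (ε ^ 2 + ‖x - x₀‖ ^ 2) ^ 2)
        - 16 * π * log (1 / ε ^ 2)|
      ≤ 16 * π * (max |log (r₀ ^ 2)| |log (1 + r₀ ^ 2)| + 1) := by
  obtain ⟨hε0, hε1⟩ := hε
  have hε2 : ε ^ 2 < 1 := by nlinarith
  have hlog : |log (ε ^ 2 + r₀ ^ 2)| ≤ max |log (r₀ ^ 2)| |log (1 + r₀ ^ 2)| :=
    abs_le_max_abs_abs (log_le_log (by positivity) (by linarith [sq_nonneg ε]))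
      (log_le_log (by positivity) (by linarith))
  have hq : |r₀ ^ 2 / (ε ^ 2 + r₀ ^ 2)| ≤ 1 := by
    rw [abs_of_nonneg (by positivity), div_le_one (by positivity)]
    linarith [sq_nonneg ε]
  rw [setIntegral_ball_gradient_sq x₀ hr₀.le hε0.ne', one_div, log_inv,
    show ∀ a b c : ℝ, 16 * π * (a - b - c) - 16 * π * -b = 16 * π * (a - c) from
      fun a b c => by ring, abs_mul, abs_of_pos (by positivity)]
  gcongr
  exact (abs_sub _ _).trans (add_le_add hlog hq)

theorem abs_log_setIntegral_exp_liouvilleBubble_sub_le {Ω : Set ℝ²} (hr₀ : 0 < r₀)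
    (hball : ball x₀ r₀ ⊆ Ω) (hΩ : Bornology.IsBounded Ω) (hε : ε ∈ Ioo (0 : ℝ) 1) :
    |log (∫ x in Ω, exp (liouvilleBubble x₀ r₀ ε x)) - log (1 / ε ^ 2)|
      ≤ max |log (π * r₀ ^ 4)| |log (π * r₀ ^ 4 + volume.real Ω)| := by
  obtain ⟨hε0, hε1⟩ := hε
  have hε2 : ε ^ 2 < 1 := by nlinarith
  have hV : 0 ≤ volume.real Ω := measureReal_nonneg
  have hsum : volume.real Ω + π * r₀ ^ 4 / ε ^ 2
      = (π * r₀ ^ 4 + volume.real Ω * ε ^ 2) / ε ^ 2 := by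
    field_simp
    ring
  rw [setIntegral_exp_liouvilleBubble x₀ hr₀.le hε0.ne' hball hΩ, hsum,
    ← log_div (by positivity) (by positivity), div_div_div_cancel_right₀ (by positivity),
    div_one]
  exact abs_le_max_abs_abs (log_le_log (by positivity) (by nlinarith))
    (log_le_log (by positivity) (by nlinarith))

end LiouvilleBubble

theorem abs_half_sub_mul_sub_le {E L ℓ lam C₁ C₂ : ℝ} (hE : |E - 16 * π * ℓ| ≤ C₁)
    (hL : |L - ℓ| ≤ C₂) :
    |1 / 2 * E - lam * L - (8 * π - lam) * ℓ| ≤ C₁ / 2 + |lam| * C₂ :=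
  calc |1 / 2 * E - lam * L - (8 * π - lam) * ℓ|
      = |1 / 2 * (E - 16 * π * ℓ) + -(lam * (L - ℓ))| := by ring_nf
    _ ≤ 1 / 2 * |E - 16 * π * ℓ| + |lam| * |L - ℓ| := by
      grw [abs_add_le, abs_neg, abs_mul, abs_mul, abs_of_pos (by norm_num : (0 : ℝ) < 1 / 2)]
    _ ≤ 1 / 2 * C₁ + |lam| * C₂ := by gcongr
    _ = C₁ / 2 + |lam| * C₂ := by ring

theorem tendsto_atBot_of_abs_sub_mul_le {α : Type*} {l : Filter α} {f ℓ : α → ℝ} {k C : ℝ}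
    (hk : k < 0) (hℓ : Tendsto ℓ l atTop) (hf : ∀ᶠ x in l, |f x - k * ℓ x| ≤ C) :
    Tendsto f l atBot :=
  tendsto_atBot_mono' l (hf.mono fun _ hx => by linarith [(abs_le.1 hx).2])
    (tendsto_atBot_add_const_right _ C (hℓ.const_mul_atTop_of_neg hk))

theorem tendsto_log_one_div_sq_nhdsGT_zero :
    Tendsto (fun ε : ℝ => log (1 / ε ^ 2)) (𝓝[>] 0) atTop := by
  have h : (fun ε : ℝ => log (1 / ε ^ 2)) = fun ε => -(2 * log ε) := by
    ext ε
    rw [one_div, log_inv, log_pow, Nat.cast_ofNat]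
  rw [h]
  exact tendsto_neg_atBot_atTop.comp (tendsto_log_nhdsGT_zero.const_mul_atBot two_pos)

theorem stmt6_general (Ω : Set (EuclideanSpace ℝ (Fin 2)))
    (x₀ : EuclideanSpace ℝ (Fin 2)) (r₀ : ℝ) (hr₀ : 0 < r₀)
    (hball : Metric.ball x₀ r₀ ⊆ Ω)
    (hΩb : Bornology.IsBounded Ω) (lam : ℝ) :
    (∃ C > (0:ℝ), ∀ ε ∈ Set.Ioo (0:ℝ) 1,
      |(∫ x in Metric.ball x₀ r₀,
          16 * ‖x - x₀‖ ^ 2 / ((ε ^ 2 + ‖x - x₀‖ ^ 2) ^ 2))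
        - 16 * Real.pi * Real.log (1 / ε ^ 2)| ≤ C ∧
      |Real.log (∫ x in Ω, Real.exp
            (if x ∈ Metric.ball x₀ r₀ then
              Real.log ((ε ^ 2 + r₀ ^ 2) ^ 2 / (ε ^ 2 + ‖x - x₀‖ ^ 2) ^ 2)
             else 0))
        - Real.log (1 / ε ^ 2)| ≤ C ∧
      |((1 / 2) * (∫ x in Metric.ball x₀ r₀,
            16 * ‖x - x₀‖ ^ 2 / ((ε ^ 2 + ‖x - x₀‖ ^ 2) ^ 2))
          - lam * Real.log (∫ x in Ω, Real.exp
              (if x ∈ Metric.ball x₀ r₀ then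
                Real.log ((ε ^ 2 + r₀ ^ 2) ^ 2 / (ε ^ 2 + ‖x - x₀‖ ^ 2) ^ 2)
               else 0)))
        - (8 * Real.pi - lam) * Real.log (1 / ε ^ 2)| ≤ C) ∧
    (8 * Real.pi < lam →
      Tendsto (fun ε : ℝ =>
          (1 / 2) * (∫ x in Metric.ball x₀ r₀,
              16 * ‖x - x₀‖ ^ 2 / ((ε ^ 2 + ‖x - x₀‖ ^ 2) ^ 2))
            - lam * Real.log (∫ x in Ω, Real.exp
                (if x ∈ Metric.ball x₀ r₀ then
                  Real.log ((ε ^ 2 + r₀ ^ 2) ^ 2 / (ε ^ 2 + ‖x - x₀‖ ^ 2) ^ 2)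
                 else 0)))
        (nhdsWithin 0 (Set.Ioi 0)) atBot) := by
  have hu : ∀ ε x, (if x ∈ ball x₀ r₀ then
      log ((ε ^ 2 + r₀ ^ 2) ^ 2 / (ε ^ 2 + ‖x - x₀‖ ^ 2) ^ 2) else 0)
      = liouvilleBubble x₀ r₀ ε x := fun _ _ => rfl
  simp only [hu]
  have hE := fun ε (hε : ε ∈ Ioo (0 : ℝ) 1) => abs_setIntegral_ball_gradient_sq_sub_le x₀ hr₀ hε
  have hL := fun ε (hε : ε ∈ Ioo (0 : ℝ) 1) =>
    abs_log_setIntegral_exp_liouvilleBubble_sub_le x₀ hr₀ hball hΩb hε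
  have hI := fun ε hε => abs_half_sub_mul_sub_le (lam := lam) (hE ε hε) (hL ε hε)
  set C₁ := 16 * π * (max |log (r₀ ^ 2)| |log (1 + r₀ ^ 2)| + 1)
  set C₂ := max |log (π * r₀ ^ 4)| |log (π * r₀ ^ 4 + volume.real Ω)|
  have hC₁ : 0 ≤ C₁ := by positivity
  have hC₂ : 0 ≤ C₂ := le_max_of_le_left (abs_nonneg _)
  have hlamC₂ : 0 ≤ |lam| * C₂ := by positivity
  refine ⟨⟨C₁ + C₂ + |lam| * C₂ + 1, by positivity, fun ε hε => ⟨?_, ?_, ?_⟩⟩, fun hlam => ?_⟩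
  · linarith [hE ε hε]
  · linarith [hL ε hε]
  · linarith [hI ε hε]
  · exact tendsto_atBot_of_abs_sub_mul_le (by linarith) tendsto_log_one_div_sq_nhdsGT_zero
      (eventually_of_mem (Ioo_mem_nhdsGT one_pos) hI)

/-- For the Liouville-type test functions
u_ε(x) = log((ε²+r₀²)²/(ε²+|x−x₀|²)²) on B_{r₀}(x₀), u_ε = 0 elsewhere
(whose gradient squared modulus is 16|x−x₀|²/(ε²+|x−x₀|²)² on the ball, 0 outside),
one has ∫_Ω |∇u_ε|² = 16π log(1/ε²) + O(1), log ∫_Ω e^{u_ε} = log(1/ε²) + O(1),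
hence I_λ(u_ε) = (8π−λ) log(1/ε²) + O(1); in particular I_λ(u_ε) → −∞ as ε → 0⁺
when λ > 8π. -/
theorem stmt6 (Ω : Set (EuclideanSpace ℝ (Fin 2)))
    (x₀ : EuclideanSpace ℝ (Fin 2)) (r₀ : ℝ) (hr₀ : 0 < r₀)
    (hball : Metric.ball x₀ r₀ ⊆ Ω) (hΩm : MeasurableSet Ω)
    (hΩb : Bornology.IsBounded Ω) (lam : ℝ) :
    (∃ C > (0:ℝ), ∀ ε ∈ Set.Ioo (0:ℝ) 1,
      |(∫ x in Metric.ball x₀ r₀,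
          16 * ‖x - x₀‖ ^ 2 / ((ε ^ 2 + ‖x - x₀‖ ^ 2) ^ 2))
        - 16 * Real.pi * Real.log (1 / ε ^ 2)| ≤ C ∧
      |Real.log (∫ x in Ω, Real.exp
            (if x ∈ Metric.ball x₀ r₀ then
              Real.log ((ε ^ 2 + r₀ ^ 2) ^ 2 / (ε ^ 2 + ‖x - x₀‖ ^ 2) ^ 2)
             else 0))
        - Real.log (1 / ε ^ 2)| ≤ C ∧
      |((1 / 2) * (∫ x in Metric.ball x₀ r₀,
            16 * ‖x - x₀‖ ^ 2 / ((ε ^ 2 + ‖x - x₀‖ ^ 2) ^ 2))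
          - lam * Real.log (∫ x in Ω, Real.exp
              (if x ∈ Metric.ball x₀ r₀ then
                Real.log ((ε ^ 2 + r₀ ^ 2) ^ 2 / (ε ^ 2 + ‖x - x₀‖ ^ 2) ^ 2)
               else 0)))
        - (8 * Real.pi - lam) * Real.log (1 / ε ^ 2)| ≤ C) ∧
    (8 * Real.pi < lam →
      Tendsto (fun ε : ℝ =>
          (1 / 2) * (∫ x in Metric.ball x₀ r₀,
              16 * ‖x - x₀‖ ^ 2 / ((ε ^ 2 + ‖x - x₀‖ ^ 2) ^ 2))
            - lam * Real.log (∫ x in Ω, Real.exp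
                (if x ∈ Metric.ball x₀ r₀ then
                  Real.log ((ε ^ 2 + r₀ ^ 2) ^ 2 / (ε ^ 2 + ‖x - x₀‖ ^ 2) ^ 2)
                 else 0)))
        (nhdsWithin 0 (Set.Ioi 0)) atBot) :=
  stmt6_general Ω x₀ r₀ hr₀ hball hΩb lam
end

section
/- Let ℓ ∈ ℕ, and let β_1,…,β_ℓ > 0 be fixed. For y ∈ ℂ^ℓ, suppose z = (z_1,…,z_ℓ) ∈ ℂ^ℓ solves the system Σ_{i=1}^ℓ β_i z_i^j = y_j for j = 1,…,ℓ. Then z → 0 as y → 0; precisely, for every ε > 0 there is δ > 0 such that if |y| < δ and z solves the system, then max_i |z_i| < ε. -/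
/-!
The power-sum map `z ↦ (∑ βᵢ zᵢ ^ (j + 1))ⱼ` vanishes only at `z = 0`: grouping equal
coordinates turns the system into a Vandermonde system with distinct nodes, and positivity of
the `βᵢ` keeps the grouped weights nonzero. Hence its norm has a positive minimum `c` on the unit
sphere, and since the `j`-th component is homogeneous of degree `j + 1 ≤ ℓ`, every solution
satisfies `c * min ‖z‖ 1 ^ ℓ ≤ ‖y‖`.
-/

open Finset

theorem Finset.eq_zero_of_forall_sum_mul_pow_eq_zero {K : Type*} [Field K] {s : Finset K}
    {v : K → K} (h : ∀ k < #s, ∑ x ∈ s, v x * x ^ k = 0) : ∀ x ∈ s, v x = 0 := by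
  set e : Fin #s ≃ s := s.equivFin.symm
  have hv : (fun j => v (e j)) = 0 := by
    refine Matrix.eq_zero_of_forall_pow_sum_mul_pow_eq_zero (f := fun j => (e j : K))
      (Subtype.val_injective.comp e.injective) fun k => ?_
    rw [e.sum_comp (fun x : s => v x * (x : K) ^ (k : ℕ)),
      sum_coe_sort s (fun x => v x * x ^ (k : ℕ))]
    exact h k k.2
  intro x hx
  simpa using congrFun hv (e.symm ⟨x, hx⟩)

theorem min_one_pow_le_pow {R : Type*} [Semiring R] [LinearOrder R] [IsStrictOrderedRing R]
    {a : R} (ha : 0 ≤ a) {k n : ℕ} (hkn : k ≤ n) : min a 1 ^ n ≤ a ^ k :=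
  calc min a 1 ^ n ≤ min a 1 ^ k :=
        pow_le_pow_of_le_one (le_min ha zero_le_one) (min_le_right a 1) hkn
    _ ≤ a ^ k := pow_le_pow_left₀ (le_min ha zero_le_one) (min_le_left a 1) k

theorem exists_pos_le_norm_of_mem_sphere {E F : Type*} [NormedAddCommGroup E] [NormedSpace ℝ E]
    [ProperSpace E] [Nontrivial E] [NormedAddCommGroup F] {f : E → F} (hf : Continuous f)
    (hf0 : ∀ x, f x = 0 → x = 0) : ∃ c > 0, ∀ x ∈ Metric.sphere (0 : E) 1, c ≤ ‖f x‖ := by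
  obtain ⟨x₀, hx₀, hmin⟩ := (isCompact_sphere (0 : E) 1).exists_isMinOn
    (NormedSpace.sphere_nonempty.mpr zero_le_one) hf.norm.continuousOn
  refine ⟨‖f x₀‖, norm_pos_iff.mpr fun h => ?_, fun x hx => hmin hx⟩
  simp [hf0 x₀ h] at hx₀

section PowerSums

variable {ι 𝕜 : Type*} [Fintype ι] [RCLike 𝕜]

def weightedPowerSums (β : ι → ℝ) (n : ℕ) (z : ι → 𝕜) : Fin n → 𝕜 :=
  fun j => ∑ i, (β i : 𝕜) * z i ^ ((j : ℕ) + 1)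

theorem eq_zero_of_weightedPowerSums_eq_zero {β : ι → ℝ} (hβ : ∀ i, 0 < β i) {n : ℕ}
    (hn : Fintype.card ι ≤ n) {z : ι → 𝕜} (hz : weightedPowerSums β n z = 0) : z = 0 := by
  classical
  set T := univ.image z
  set c : 𝕜 → 𝕜 := fun w => ∑ i with z i = w, (β i : 𝕜)
  have hsum (k : ℕ) : ∑ i, (β i : 𝕜) * z i ^ (k + 1) = ∑ w ∈ T, c w * w * w ^ k := by
    rw [← sum_fiberwise_of_maps_to (g := z) (t := T) fun i _ => mem_image_of_mem z (mem_univ i)]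
    refine sum_congr rfl fun w _ => ?_
    rw [mul_assoc, ← pow_succ', sum_mul]
    exact sum_congr rfl fun i hi => by rw [(mem_filter.mp hi).2]
  have hcw : ∀ w ∈ T, c w * w = 0 := by
    refine Finset.eq_zero_of_forall_sum_mul_pow_eq_zero fun k hk => ?_
    rw [← hsum]
    exact congrFun hz ⟨k, hk.trans_le (card_image_le.trans (by simpa using hn))⟩
  funext i
  have hc : c (z i) ≠ 0 := by
    simp only [c, ← RCLike.ofReal_sum, ne_eq, RCLike.ofReal_eq_zero]
    exact (sum_pos (fun i _ => hβ i) ⟨i, by simp⟩).ne'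
  exact (mul_eq_zero.mp (hcw _ (mem_image_of_mem z (mem_univ i)))).resolve_left hc

theorem continuous_weightedPowerSums (β : ι → ℝ) (n : ℕ) :
    Continuous (weightedPowerSums (𝕜 := 𝕜) β n) := by
  unfold weightedPowerSums
  fun_prop

theorem weightedPowerSums_smul (β : ι → ℝ) (n : ℕ) (t : 𝕜) (z : ι → 𝕜) (j : Fin n) :
    weightedPowerSums β n (t • z) j = t ^ ((j : ℕ) + 1) * weightedPowerSums β n z j := by
  simp only [weightedPowerSums, Pi.smul_apply, smul_eq_mul, mul_pow, mul_sum]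
  exact sum_congr rfl fun i _ => by ring

theorem exists_pos_mul_min_pow_le_norm_weightedPowerSums [Nonempty ι] {β : ι → ℝ}
    (hβ : ∀ i, 0 < β i) {n : ℕ} (hn : Fintype.card ι ≤ n) :
    ∃ c > 0, ∀ z : ι → 𝕜, c * min ‖z‖ 1 ^ n ≤ ‖weightedPowerSums β n z‖ := by
  obtain ⟨c, hc, hsphere⟩ := exists_pos_le_norm_of_mem_sphere
    (continuous_weightedPowerSums (𝕜 := 𝕜) β n)
    fun z hz => eq_zero_of_weightedPowerSums_eq_zero hβ hn hz
  refine ⟨c, hc, fun z => ?_⟩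
  rcases eq_or_ne z 0 with rfl | hz
  · have : n ≠ 0 := (Fintype.card_pos.trans_le hn).ne'
    simp [this]
  set u := (‖z‖⁻¹ : 𝕜) • z
  have hu : ‖u‖ = 1 := norm_smul_inv_norm hz
  have hzu : z = (‖z‖ : 𝕜) • u := by
    rw [smul_inv_smul₀ (RCLike.ofReal_ne_zero.mpr (norm_ne_zero_iff.mpr hz))]
  have hm : 0 ≤ min ‖z‖ 1 ^ n := by positivity
  calc c * min ‖z‖ 1 ^ n ≤ min ‖z‖ 1 ^ n * ‖weightedPowerSums β n u‖ := by
        rw [mul_comm]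
        exact mul_le_mul_of_nonneg_left (hsphere u (by simpa using hu)) hm
    _ = ‖min ‖z‖ 1 ^ n • weightedPowerSums β n u‖ := by
        rw [norm_smul, Real.norm_of_nonneg hm]
    _ ≤ ‖weightedPowerSums β n z‖ := by
        refine (pi_norm_le_iff_of_nonneg (norm_nonneg _)).mpr fun j => ?_
        rw [Pi.smul_apply, norm_smul, Real.norm_of_nonneg hm]
        refine le_trans ?_ (norm_le_pi_norm _ j)
        conv_rhs =>
          rw [hzu, weightedPowerSums_smul, norm_mul, norm_pow, RCLike.norm_ofReal, abs_norm]
        exact mul_le_mul_of_nonneg_right (min_one_pow_le_pow (norm_nonneg z) j.2) (norm_nonneg _)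

end PowerSums

/-- For fixed β₁,…,β_ℓ > 0, solutions z ∈ ℂ^ℓ of the weighted
power-sum system Σᵢ βᵢ zᵢʲ = yⱼ (j = 1,…,ℓ) tend to 0 as y → 0: for every ε > 0
there is δ > 0 such that ‖y‖ < δ and z solving the system imply maxᵢ |zᵢ| < ε. -/
theorem stmt12 (ℓ : ℕ) (hℓ : 0 < ℓ) (β : Fin ℓ → ℝ) (hβ : ∀ i, 0 < β i) :
    ∀ ε > (0:ℝ), ∃ δ > (0:ℝ), ∀ y z : Fin ℓ → ℂ,
      ‖y‖ < δ →
      (∀ j : Fin ℓ, ∑ i, (β i : ℂ) * z i ^ ((j : ℕ) + 1) = y j) →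
      ∀ i, ‖z i‖ < ε := by
  intro ε hε
  have : Nonempty (Fin ℓ) := Fin.pos_iff_nonempty.mp hℓ
  obtain ⟨c, hc, hbound⟩ :=
    exists_pos_mul_min_pow_le_norm_weightedPowerSums (𝕜 := ℂ) hβ (Fintype.card_fin ℓ).le
  refine ⟨c * min ε 1 ^ ℓ, by positivity, fun y z hy hz i => ?_⟩
  have hyz : weightedPowerSums β ℓ z = y := funext hz
  have hmin : min ‖z‖ 1 < min ε 1 :=
    lt_of_pow_lt_pow_left₀ ℓ (by positivity)
      (lt_of_mul_lt_mul_left ((hbound z).trans_lt (hyz ▸ hy)) hc.le)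
  exact (norm_le_pi_norm z i).trans_lt
    (lt_of_not_ge fun h => hmin.not_ge (min_le_min_right 1 h))
end

section
/- Let u : Ω → [0,∞), x₀ ∈ Ω with u(x₀) = max u, P a Borel probability measure on [0,1], and define α₀ by e^{α₀ u(x₀)} = ∫ α e^{α u(x₀)} P(dα), I = ∬_{[0,1]×Ω} e^{αu} P(dα)dx, w = α₀ u − log I, and V = (α₀ λ / I)(∫_{[0,1]} α e^{αu} P(dα)) e^{−w}. Then V(x₀) = α₀λ, ‖V‖_{L^∞(Ω)} ≤ α₀λ(∫_{[0,1]} α P(dα) + 1), and ∫_Ω V e^{w} dx ≤ α₀λ. -/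
/-!
With `I > 0` one has `e^{-w} = I e^{-α₀ u}`, so `V = α₀λ e^{-α₀ u} ∫ α e^{α u} dP`; at `x₀` this is
`α₀λ` by the choice of `α₀`. Since `V e^{w} = (α₀λ / I) ∫ α e^{α u} dP ≤ (α₀λ / I) ∫ e^{α u} dP`,
Fubini turns `∫_Ω V e^{w}` into at most `(α₀λ / I) · I`. Fubini also gives `I ≥ |Ω| > 0`.
-/

open MeasureTheory Real Set

lemma exp_neg_sub_log {I : ℝ} (hI : 0 < I) (t : ℝ) : exp (-(t - log I)) = exp (-t) * I := by
  rw [neg_sub, exp_sub, exp_log hI, exp_neg, div_eq_mul_inv, mul_comm]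

/-- For `α ≤ α₀` the factor `e^{(α - α₀) r}` is at most `1`; for `α ≥ α₀` it increases with `r`. -/
lemma mul_exp_mul_mul_exp_neg_le {α α₀ r r₀ : ℝ} (hα : 0 ≤ α) (hr : 0 ≤ r) (hrr₀ : r ≤ r₀) :
    α * exp (α * r) * exp (-(α₀ * r)) ≤ α + α * exp (α * r₀) * exp (-(α₀ * r₀)) := by
  have hshift : ∀ s, exp (α * s) * exp (-(α₀ * s)) = exp ((α - α₀) * s) := fun s => by
    rw [← exp_add]; ring_nf
  rw [mul_assoc, mul_assoc, hshift, hshift]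
  have hpos := exp_pos ((α - α₀) * r₀)
  rcases le_total α α₀ with h | h
  · have : exp ((α - α₀) * r) ≤ 1 := exp_le_one_iff.2 (by nlinarith)
    nlinarith
  · have : exp ((α - α₀) * r) ≤ exp ((α - α₀) * r₀) := exp_le_exp.2 (by nlinarith)
    nlinarith

lemma setIntegral_mul_exp_mul_nonneg (P : Measure ℝ) (r : ℝ) :
    0 ≤ ∫ α in Icc (0 : ℝ) 1, α * exp (α * r) ∂P :=
  setIntegral_nonneg measurableSet_Icc fun _ hα => mul_nonneg hα.1 (exp_pos _).le

section Fibre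

variable (P : Measure ℝ) [IsFiniteMeasure P]

lemma setIntegral_mul_exp_mul_exp_neg_le {α₀ r r₀ : ℝ} (hr : 0 ≤ r) (hrr₀ : r ≤ r₀) :
    (∫ α in Icc (0 : ℝ) 1, α * exp (α * r) ∂P) * exp (-(α₀ * r))
      ≤ (∫ α in Icc (0 : ℝ) 1, α ∂P)
        + (∫ α in Icc (0 : ℝ) 1, α * exp (α * r₀) ∂P) * exp (-(α₀ * r₀)) := by
  rw [← integral_mul_const, ← integral_mul_const,
    ← integral_add (by fun_prop : Continuous fun α : ℝ => α).integrableOn_Icc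
      (by fun_prop : Continuous fun α => α * exp (α * r₀) * exp (-(α₀ * r₀))).integrableOn_Icc]
  exact setIntegral_mono_on
    (by fun_prop : Continuous fun α => α * exp (α * r) * exp (-(α₀ * r))).integrableOn_Icc
    (by fun_prop : Continuous fun α => α + α * exp (α * r₀) * exp (-(α₀ * r₀))).integrableOn_Icc
    measurableSet_Icc fun α hα => mul_exp_mul_mul_exp_neg_le hα.1 hr hrr₀

lemma setIntegral_mul_exp_mul_le (r : ℝ) :
    ∫ α in Icc (0 : ℝ) 1, α * exp (α * r) ∂P ≤ ∫ α in Icc (0 : ℝ) 1, exp (α * r) ∂P :=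
  setIntegral_mono_on (by fun_prop : Continuous fun α => α * exp (α * r)).integrableOn_Icc
    (by fun_prop : Continuous fun α => exp (α * r)).integrableOn_Icc measurableSet_Icc
    fun _ hα => mul_le_of_le_one_left (exp_pos _).le hα.2

variable {P} in
lemma one_le_setIntegral_exp_mul (hP : P (Icc 0 1) = 1) {r : ℝ} (hr : 0 ≤ r) :
    1 ≤ ∫ α in Icc (0 : ℝ) 1, exp (α * r) ∂P := by
  have := setIntegral_ge_of_const_le_real (s := Icc (0 : ℝ) 1) measurableSet_Icc
    (measure_ne_top P _)
    (fun α hα => one_le_exp (mul_nonneg hα.1 hr))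
    (by fun_prop : Continuous fun α => exp (α * r)).integrableOn_Icc
  rwa [measureReal_def, hP, ENNReal.toReal_one, mul_one] at this

lemma integrable_exp_mul_prod {X : Type*} [MeasurableSpace X] {μ : Measure X} {u : X → ℝ}
    (hu_meas : Measurable u) (hu : ∀ x, 0 ≤ u x) (hexp : Integrable (fun x => exp (u x)) μ) :
    Integrable (fun p : X × ℝ => exp (p.2 * u p.1)) (μ.prod (P.restrict (Icc 0 1))) := by
  refine (hexp.comp_fst _).mono' (by fun_prop) ?_
  filter_upwards [Measure.quasiMeasurePreserving_snd.ae (ae_restrict_mem measurableSet_Icc)]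
    with p hp
  rw [norm_of_nonneg (exp_pos _).le]
  exact exp_le_exp.2 (mul_le_of_le_one_left (hu p.1) hp.2)

end Fibre

theorem stmt19_general (Ω : Set (EuclideanSpace ℝ (Fin 2)))
    (hΩfin : volume Ω ≠ ⊤) (hΩpos : 0 < (volume Ω).toReal)
    (P : Measure ℝ) [IsProbabilityMeasure P] (hP : P (Set.Icc 0 1) = 1)
    (lam : ℝ) (hlam : 0 < lam)
    (u : EuclideanSpace ℝ (Fin 2) → ℝ) (humeas : Measurable u)
    (hu : ∀ x, 0 ≤ u x)
    (x₀ : EuclideanSpace ℝ (Fin 2))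
    (hmax : ∀ x ∈ Ω, u x ≤ u x₀)
    (hint : ∀ a ∈ Set.Icc (0:ℝ) 1,
      IntegrableOn (fun x => Real.exp (a * u x)) Ω)
    (α₀ : ℝ) (hα₀pos : 0 < α₀)
    (hα₀ : Real.exp (α₀ * u x₀)
      = ∫ α in Set.Icc (0:ℝ) 1, α * Real.exp (α * u x₀) ∂P) :
    (α₀ * lam / (∫ a in Set.Icc (0:ℝ) 1, (∫ y in Ω, Real.exp (a * u y)) ∂P)
        * (∫ α in Set.Icc (0:ℝ) 1, α * Real.exp (α * u x₀) ∂P)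
        * Real.exp (-(α₀ * u x₀
            - Real.log (∫ a in Set.Icc (0:ℝ) 1,
                (∫ y in Ω, Real.exp (a * u y)) ∂P)))
      = α₀ * lam) ∧
    (∀ x ∈ Ω,
      α₀ * lam / (∫ a in Set.Icc (0:ℝ) 1, (∫ y in Ω, Real.exp (a * u y)) ∂P)
        * (∫ α in Set.Icc (0:ℝ) 1, α * Real.exp (α * u x) ∂P)
        * Real.exp (-(α₀ * u x
            - Real.log (∫ a in Set.Icc (0:ℝ) 1,
                (∫ y in Ω, Real.exp (a * u y)) ∂P)))
      ≤ α₀ * lam * ((∫ α in Set.Icc (0:ℝ) 1, α ∂P) + 1)) ∧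
    (∫ x in Ω,
        (α₀ * lam / (∫ a in Set.Icc (0:ℝ) 1, (∫ y in Ω, Real.exp (a * u y)) ∂P)
          * (∫ α in Set.Icc (0:ℝ) 1, α * Real.exp (α * u x) ∂P)
          * Real.exp (-(α₀ * u x
              - Real.log (∫ a in Set.Icc (0:ℝ) 1,
                  (∫ y in Ω, Real.exp (a * u y)) ∂P))))
          * Real.exp (α₀ * u x
              - Real.log (∫ a in Set.Icc (0:ℝ) 1,
                  (∫ y in Ω, Real.exp (a * u y)) ∂P)))
      ≤ α₀ * lam := by
  set I := ∫ a in Icc (0 : ℝ) 1, (∫ y in Ω, exp (a * u y)) ∂P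
  have hprod := integrable_exp_mul_prod P humeas hu
    (by simpa using hint 1 (by norm_num) : IntegrableOn _ Ω)
  have hI : I = ∫ x in Ω, ∫ α in Icc (0 : ℝ) 1, exp (α * u x) ∂P :=
    (integral_integral_swap (f := fun x α => exp (α * u x)) hprod).symm
  have hI_pos : 0 < I := calc
    0 < volume.real Ω := hΩpos
    _ = ∫ _ in Ω, (1 : ℝ) := by simp
    _ ≤ I := hI ▸ setIntegral_mono (integrableOn_const hΩfin) hprod.integral_prod_left
        fun x => one_le_setIntegral_exp_mul hP (hu x)
  refine ⟨?_, fun x hx => ?_, ?_⟩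
  · rw [exp_neg_sub_log hI_pos, ← hα₀, mul_assoc, ← mul_assoc (exp _), ← exp_add,
      add_neg_cancel, exp_zero, one_mul, div_mul_cancel₀ _ hI_pos.ne']
  · have hJ := setIntegral_mul_exp_mul_exp_neg_le P (α₀ := α₀) (hu x) (hmax x hx)
    rw [← hα₀, ← exp_add, add_neg_cancel, exp_zero] at hJ
    calc _ = α₀ * lam * ((∫ α in Icc (0 : ℝ) 1, α * exp (α * u x) ∂P) * exp (-(α₀ * u x))) := by
          rw [exp_neg_sub_log hI_pos]
          generalize ∫ α in Icc (0 : ℝ) 1, α * exp (α * u x) ∂P = J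
          field_simp
      _ ≤ _ := by gcongr
  · simp_rw [mul_assoc _ (exp _), ← exp_add, neg_add_cancel, exp_zero, mul_one]
    rw [integral_const_mul]
    calc _ ≤ α₀ * lam / I * I := by
          gcongr
          rw [hI]
          exact integral_mono_of_nonneg
            (ae_of_all _ fun x => setIntegral_mul_exp_mul_nonneg P (u x)) hprod.integral_prod_left
            (ae_of_all _ fun x => setIntegral_mul_exp_mul_le P (u x))
      _ = α₀ * lam := div_mul_cancel₀ _ hI_pos.ne'

/-- With u ≥ 0 attaining its maximum on Ω at x₀, α₀ defined by
e^{α₀u(x₀)} = ∫ α e^{αu(x₀)} P(dα), I = ∬ e^{αu} P(dα)dx, w = α₀u − log I and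
V = (α₀λ/I)(∫ α e^{αu} P(dα)) e^{−w}, one has V(x₀) = α₀λ,
V ≤ α₀λ(∫ α P(dα) + 1) on Ω, and ∫_Ω V e^{w} ≤ α₀λ. -/
theorem stmt19 (Ω : Set (EuclideanSpace ℝ (Fin 2))) (hΩm : MeasurableSet Ω)
    (hΩfin : volume Ω ≠ ⊤) (hΩpos : 0 < (volume Ω).toReal)
    (P : Measure ℝ) [IsProbabilityMeasure P] (hP : P (Set.Icc 0 1) = 1)
    (lam : ℝ) (hlam : 0 < lam)
    (u : EuclideanSpace ℝ (Fin 2) → ℝ) (humeas : Measurable u)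
    (hu : ∀ x, 0 ≤ u x)
    (x₀ : EuclideanSpace ℝ (Fin 2)) (hx₀ : x₀ ∈ Ω)
    (hmax : ∀ x ∈ Ω, u x ≤ u x₀)
    (hint : ∀ a ∈ Set.Icc (0:ℝ) 1,
      IntegrableOn (fun x => Real.exp (a * u x)) Ω)
    (α₀ : ℝ) (hα₀pos : 0 < α₀)
    (hα₀ : Real.exp (α₀ * u x₀)
      = ∫ α in Set.Icc (0:ℝ) 1, α * Real.exp (α * u x₀) ∂P) :
    (α₀ * lam / (∫ a in Set.Icc (0:ℝ) 1, (∫ y in Ω, Real.exp (a * u y)) ∂P)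
        * (∫ α in Set.Icc (0:ℝ) 1, α * Real.exp (α * u x₀) ∂P)
        * Real.exp (-(α₀ * u x₀
            - Real.log (∫ a in Set.Icc (0:ℝ) 1,
                (∫ y in Ω, Real.exp (a * u y)) ∂P)))
      = α₀ * lam) ∧
    (∀ x ∈ Ω,
      α₀ * lam / (∫ a in Set.Icc (0:ℝ) 1, (∫ y in Ω, Real.exp (a * u y)) ∂P)
        * (∫ α in Set.Icc (0:ℝ) 1, α * Real.exp (α * u x) ∂P)
        * Real.exp (-(α₀ * u x
            - Real.log (∫ a in Set.Icc (0:ℝ) 1,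
                (∫ y in Ω, Real.exp (a * u y)) ∂P)))
      ≤ α₀ * lam * ((∫ α in Set.Icc (0:ℝ) 1, α ∂P) + 1)) ∧
    (∫ x in Ω,
        (α₀ * lam / (∫ a in Set.Icc (0:ℝ) 1, (∫ y in Ω, Real.exp (a * u y)) ∂P)
          * (∫ α in Set.Icc (0:ℝ) 1, α * Real.exp (α * u x) ∂P)
          * Real.exp (-(α₀ * u x
              - Real.log (∫ a in Set.Icc (0:ℝ) 1,
                  (∫ y in Ω, Real.exp (a * u y)) ∂P))))
          * Real.exp (α₀ * u x
              - Real.log (∫ a in Set.Icc (0:ℝ) 1,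
                  (∫ y in Ω, Real.exp (a * u y)) ∂P)))
      ≤ α₀ * lam :=
  stmt19_general Ω hΩfin hΩpos P hP lam hlam u humeas hu x₀ hmax hint α₀ hα₀pos hα₀
end
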